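/- Chen's identity (split form): Let x : ℝ → ℝ^d be a continuously differentiable path, let s ≤ m ≤ t be real numbers, and let (i_1, …, i_k) ∈ {1, …, d}^k be a word. Then S_{(i_1, …, i_k)}(x)_{[s,t]} = Σ_{ℓ=0}^{k} S_{(i_1, …, i_ℓ)}(x)_{[s,m]} · S_{(i_{ℓ+1}, …, i_k)}(x)_{[m,t]}, where the ℓ = 0 and ℓ = k terms use the empty-word convention S_{()} = 1. -/

import Mathlib

open intervalIntegral Topology Filter

/-- Coordinate signature, recursing on the *reversed* word: the head of the
list is the last letter `i_k` of the word. -/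
noncomputable def sigRev {d : ℕ} (x : ℝ → Fin d → ℝ) (s : ℝ) : List (Fin d) → ℝ → ℝ
  | [], _ => 1
  | i :: w, t => ∫ u in s..t, sigRev x s w u * deriv (fun v => x v i) u

/-- Coordinate signature `S_{(i_1,…,i_k)}(x)_{[s,t]}` of a path `x : ℝ → ℝ^d`,
defined by `S_{()} = 1` and
`S_{(i_1,…,i_k)}(x)_{[s,t]} = ∫_s^t S_{(i_1,…,i_{k-1})}(x)_{[s,u]} · x_{i_k}'(u) du`. -/
noncomputable def sig {d : ℕ} (x : ℝ → Fin d → ℝ) (s t : ℝ) (w : List (Fin d)) : ℝ :=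
  sigRev x s w.reverse t

/-! Chen's identity is proved for the reversed word by induction on its last letter `i`: split
`∫_s^t` at `m`; the piece over `[s, m]` is the term with the whole word on `[s, m]`, and on
`[m, t]` the induction hypothesis expands the integrand `S_w(x)_{[s,u]}` as a sum of
`S(x)_{[s,m]} · S(x)_{[m,u]}`, whose integrals against `x_i'` append `i` to the `[m, u]` factors. -/

section Chen

variable {d : ℕ} {x : ℝ → Fin d → ℝ}

@[simp]
theorem sigRev_nil (s t : ℝ) : sigRev x s [] t = 1 := rfl

theorem sigRev_cons (s t : ℝ) (i : Fin d) (w : List (Fin d)) :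
    sigRev x s (i :: w) t = ∫ u in s..t, sigRev x s w u * deriv (fun v => x v i) u := rfl

variable (hx : ∀ i, Continuous (deriv fun v => x v i))
include hx

theorem continuous_sigRev (s : ℝ) : ∀ w : List (Fin d), Continuous (sigRev x s w)
  | [] => continuous_const
  | i :: w => continuous_primitive
      (fun _ _ => ((continuous_sigRev s w).mul (hx i)).intervalIntegrable _ _) s

theorem sigRev_cons_eq_add (s m t : ℝ) (i : Fin d) (w : List (Fin d)) :
    sigRev x s (i :: w) t =
      sigRev x s (i :: w) m + ∫ u in m..t, sigRev x s w u * deriv (fun v => x v i) u := by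
  have hint (a b : ℝ) : IntervalIntegrable (fun u => sigRev x s w u * deriv (fun v => x v i) u)
      MeasureTheory.volume a b :=
    ((continuous_sigRev hx s w).mul (hx i)).intervalIntegrable a b
  rw [sigRev_cons, sigRev_cons, integral_add_adjacent_intervals (hint s m) (hint m t)]

theorem sigRev_chen (s m : ℝ) :
    ∀ (w : List (Fin d)) (t : ℝ), sigRev x s w t =
      ∑ j ∈ Finset.range (w.length + 1), sigRev x s (w.drop j) m * sigRev x m (w.take j) t
  | [], t => by simp
  | i :: w, t => by
    have hexpand : (fun u => sigRev x s w u * deriv (fun v => x v i) u) = fun u =>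
        ∑ j ∈ Finset.range (w.length + 1),
          sigRev x s (w.drop j) m * (sigRev x m (w.take j) u * deriv (fun v => x v i) u) := by
      funext u
      simp only [sigRev_chen s m w u, Finset.sum_mul, mul_assoc]
    have hintegrate : (∫ u in m..t, sigRev x s w u * deriv (fun v => x v i) u) =
        ∑ j ∈ Finset.range (w.length + 1),
          sigRev x s (w.drop j) m * sigRev x m (i :: w.take j) t := by
      rw [hexpand, integral_finsetSum]
      · simp only [integral_const_mul, sigRev_cons]
      · exact fun j _ => (continuous_const.mul
          ((continuous_sigRev hx m (w.take j)).mul (hx i))).intervalIntegrable m t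
    rw [sigRev_cons_eq_add hx s m t, hintegrate, List.length_cons,
      Finset.sum_range_succ' _ (w.length + 1),
      List.drop_zero, List.take_zero, sigRev_nil, mul_one, add_comm]
    simp only [List.drop_succ_cons, List.take_succ_cons]

end Chen

theorem sum_sigRev_reverse_eq_sum_sig {d : ℕ} (x : ℝ → Fin d → ℝ) (s m t : ℝ)
    (w : List (Fin d)) :
    ∑ j ∈ Finset.range (w.length + 1),
        sigRev x s (w.reverse.drop j) m * sigRev x m (w.reverse.take j) t =
      ∑ ℓ ∈ Finset.range (w.length + 1), sig x s m (w.take ℓ) * sig x m t (w.drop ℓ) := by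
  rw [← Finset.sum_range_reflect]
  refine Finset.sum_congr rfl fun j hj => ?_
  have hj : j ≤ w.length := Nat.lt_succ_iff.mp (Finset.mem_range.mp hj)
  rw [sig, sig, List.drop_reverse, List.take_reverse]
  congr 4 <;> omega

theorem chen_identity_split_general {d : ℕ} (x : ℝ → Fin d → ℝ) (hx : ContDiff ℝ 1 x)
    (s m t : ℝ) (w : List (Fin d)) :
    sig x s t w =
      ∑ ℓ ∈ Finset.range (w.length + 1),
        sig x s m (w.take ℓ) * sig x m t (w.drop ℓ) := by
  have hderiv (i : Fin d) : Continuous (deriv fun v => x v i) :=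
    (contDiff_pi.1 hx i).continuous_deriv le_rfl
  rw [sig, sigRev_chen hderiv s m, List.length_reverse, sum_sigRev_reverse_eq_sum_sig]

/-- Chen's identity (split form). -/
theorem chen_identity_split {d : ℕ} (x : ℝ → Fin d → ℝ) (hx : ContDiff ℝ 1 x)
    (s m t : ℝ) (hsm : s ≤ m) (hmt : m ≤ t) (w : List (Fin d)) :
    sig x s t w =
      ∑ ℓ ∈ Finset.range (w.length + 1),
        sig x s m (w.take ℓ) * sig x m t (w.drop ℓ) :=
  chen_identity_split_general x hx s m t w
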